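/- Let r(z) = z log(1+z) for z > -1 and let r* be its Legendre transform, r*(p) = sup_{z > -1} (p z - r(z)). Then r* is superquadratic in the sense that r*(λ p) ≤ λ² r*(p) for every p > 0 and every λ ∈ [0,1]. -/

import Mathlib

/-! Write `S f p = {p z - f z | z > -1}`, so that `r* p = sup S r p`. Concavity of `log` gives
`log (1 + λ w) ≥ λ log (1 + w)`, hence `r (λ w) ≥ λ² r w` for `w ≥ 0` and `λ ∈ [0, 1]`. A value
`λ p z - r z` with `z > 0` is then at most `λ² (p w - r w)` for `w = z / λ`, while the values with
`z ≤ 0` are nonpositive because `r ≥ 0`, and `r* p ≥ -r 0 = 0`. -/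

open Real Set

def conjugateValues (f : ℝ → ℝ) (p : ℝ) : Set ℝ :=
  {y | ∃ z > (-1 : ℝ), y = p * z - f z}

section Conjugate

variable {f : ℝ → ℝ} {p lam : ℝ}

lemma sSup_conjugateValues_nonneg (hf0 : f 0 = 0) (hbdd : BddAbove (conjugateValues f p)) :
    0 ≤ sSup (conjugateValues f p) :=
  le_csSup hbdd ⟨0, by norm_num, by simp [hf0]⟩

lemma sSup_conjugateValues_mul_le (hp : 0 ≤ p) (hlam : 0 ≤ lam)
    (hf_nonneg : ∀ z > (-1 : ℝ), 0 ≤ f z) (hf0 : f 0 = 0)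
    (hf_scale : ∀ w ≥ (0 : ℝ), lam ^ 2 * f w ≤ f (lam * w))
    (hbdd : BddAbove (conjugateValues f p)) :
    sSup (conjugateValues f (lam * p)) ≤ lam ^ 2 * sSup (conjugateValues f p) := by
  have hsup := sSup_conjugateValues_nonneg hf0 hbdd
  refine Real.sSup_le ?_ (by positivity)
  rintro _ ⟨z, hz, rfl⟩
  rcases le_or_gt (lam * z) 0 with hlz | hlz
  · have hpz : lam * p * z ≤ 0 := by
      rw [mul_right_comm]; exact mul_nonpos_of_nonpos_of_nonneg hlz hp
    nlinarith [hf_nonneg z hz]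
  · obtain ⟨hlam0, hz0⟩ : 0 < lam ∧ 0 < z :=
      (pos_and_pos_or_neg_and_neg_of_mul_pos hlz).resolve_right fun h => by linarith [h.1]
    obtain ⟨w, hw, rfl⟩ : ∃ w > 0, z = lam * w :=
      ⟨z / lam, div_pos hz0 hlam0, (mul_div_cancel₀ z hlam0.ne').symm⟩
    calc lam * p * (lam * w) - f (lam * w) = lam ^ 2 * (p * w) - f (lam * w) := by ring
      _ ≤ lam ^ 2 * (p * w - f w) := by linarith [hf_scale w hw.le]
      _ ≤ lam ^ 2 * sSup (conjugateValues f p) :=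
        mul_le_mul_of_nonneg_left (le_csSup hbdd ⟨w, by linarith, rfl⟩) (sq_nonneg lam)

end Conjugate

lemma mul_log_one_add_nonneg {z : ℝ} (hz : -1 < z) : 0 ≤ z * log (1 + z) := by
  rcases le_or_gt 0 z with h | h
  · exact mul_nonneg h (log_nonneg (by linarith))
  · exact mul_nonneg_of_nonpos_of_nonpos h.le (log_nonpos (by linarith) (by linarith))

lemma mul_log_one_add_le_log_one_add_mul {lam u : ℝ} (h0 : 0 ≤ lam) (h1 : lam ≤ 1)
    (hu : 0 ≤ u) : lam * log (1 + u) ≤ log (1 + lam * u) := by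
  have h := strictConcaveOn_log_Ioi.concaveOn.2 (x := 1 + u) (y := 1)
    (by rw [mem_Ioi]; linarith) (by norm_num) h0 (sub_nonneg.2 h1) (add_sub_cancel lam 1)
  simp only [smul_eq_mul, log_one, mul_zero, add_zero, mul_one] at h
  rwa [show lam * (1 + u) + (1 - lam) = 1 + lam * u by ring] at h

lemma sq_mul_mul_log_one_add_le {lam w : ℝ} (h0 : 0 ≤ lam) (h1 : lam ≤ 1) (hw : 0 ≤ w) :
    lam ^ 2 * (w * log (1 + w)) ≤ lam * w * log (1 + lam * w) := by
  have hlog := mul_log_one_add_le_log_one_add_mul h0 h1 hw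
  calc lam ^ 2 * (w * log (1 + w)) = lam * w * (lam * log (1 + w)) := by ring
    _ ≤ lam * w * log (1 + lam * w) := mul_le_mul_of_nonneg_left hlog (mul_nonneg h0 hw)

lemma bddAbove_conjugateValues_mul_log_one_add {p : ℝ} (hp : 0 ≤ p) :
    BddAbove (conjugateValues (fun z => z * log (1 + z)) p) := by
  refine ⟨p * exp p, ?_⟩
  rintro _ ⟨z, hz, rfl⟩
  have hpe : 0 ≤ p * exp p := mul_nonneg hp (exp_pos p).le
  rcases le_or_gt z 0 with h | h
  · nlinarith [mul_log_one_add_nonneg hz]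
  · rcases le_or_gt p (log (1 + z)) with hlog | hlog
    · nlinarith
    · have hze : z < exp p := by
        have := (log_lt_iff_lt_exp (by linarith)).1 hlog
        linarith
      have : 0 ≤ log (1 + z) := log_nonneg (by linarith)
      nlinarith

theorem rstar_superquadratic (r rstar : ℝ → ℝ)
    (hr : ∀ z, r z = z * Real.log (1 + z))
    (hrstar : ∀ p, rstar p = sSup {y : ℝ | ∃ z > (-1 : ℝ), y = p * z - r z}) :
    ∀ p > 0, ∀ lam ∈ Icc (0 : ℝ) 1, rstar (lam * p) ≤ lam ^ 2 * rstar p := by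
  obtain rfl : r = fun z => z * log (1 + z) := funext hr
  intro p hp lam hlam
  rw [hrstar, hrstar]
  exact sSup_conjugateValues_mul_le hp.le hlam.1 (fun z hz => mul_log_one_add_nonneg hz) (by simp)
    (fun w hw => sq_mul_mul_log_one_add_le hlam.1 hlam.2 hw)
    (bddAbove_conjugateValues_mul_log_one_add hp.le)
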